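/- arXiv:1309.7986 — 5 statements merged into one kernel-verified Lean document; each statement's English description precedes it below -/
import Mathlib

section
/- Let $X$ be a random variable with gamma distribution with shape parameter $\sigma/2 > 0$ and rate $1$, i.e., with probability density $f(x) = x^{\sigma/2 - 1} e^{-x} / \Gamma(\sigma/2)$ for $x > 0$. Then for every real $\xi$, $\mathbb{E}\left[e^{\xi \sqrt{X}}\right] = \frac{1}{\Gamma(\sigma/2)} \sum_{n=0}^\infty \Gamma\!\left(\frac{\sigma+n}{2}\right) \frac{\xi^n}{n!}$. -/
/-!
Expanding `exp (ξ √x) = ∑ ξⁿ (√x)ⁿ / n!` and integrating term by term, the `n`-th term is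
`ξⁿ / n!` times the moment `E[X^{n/2}] = Γ(σ/2 + n/2) / Γ(σ/2)`. Term-by-term integration is
justified by `exp (|ξ| √x) ≤ exp (ξ² / 2) exp (x / 2)`, which is integrable because the
Gamma(σ/2, 1) law has exponential moments of every order below its rate.
-/

open MeasureTheory ProbabilityTheory Real Set
open scoped ENNReal Nat

theorem integral_exp_eq_tsum_integral_pow_div_factorial {α : Type*} [MeasurableSpace α]
    {μ : Measure α} {X : α → ℝ} (hX : AEMeasurable X μ)
    (h_int : Integrable (fun x ↦ exp |X x|) μ) :
    ∫ x, exp (X x) ∂μ = ∑' n : ℕ, (∫ x, X x ^ n ∂μ) / n ! := by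
  have h_exp (y : ℝ) : exp y = ∑' n : ℕ, y ^ n / n ! := by
    rw [exp_eq_exp_ℝ, NormedSpace.exp_eq_tsum_div]
  have h_enorm (x : α) : ∑' n : ℕ, ‖X x ^ n / n !‖ₑ = ENNReal.ofReal (exp |X x|) := by
    simp_rw [← ofReal_norm, norm_div, norm_pow, Real.norm_natCast, Real.norm_eq_abs]
    rw [← ENNReal.ofReal_tsum_of_nonneg (fun n ↦ by positivity)
      (Real.summable_pow_div_factorial _), h_exp]
  have h_meas (n : ℕ) : AEStronglyMeasurable (fun x ↦ X x ^ n / n !) μ :=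
    ((hX.pow_const n).div_const _).aestronglyMeasurable
  have h_fin : ∑' n : ℕ, ∫⁻ x, ‖X x ^ n / n !‖ₑ ∂μ ≠ ∞ := by
    rw [← lintegral_tsum fun n ↦ (h_meas n).enorm, lintegral_congr h_enorm]
    exact h_int.lintegral_lt_top.ne
  simp_rw [h_exp (X _), integral_tsum h_meas h_fin, integral_div]

namespace ProbabilityTheory

variable {a r : ℝ}

@[fun_prop]
lemma measurable_gammaPDF : Measurable (gammaPDF a r) :=
  (measurable_gammaPDFReal a r).ennreal_ofReal

lemma ae_nonneg_gammaMeasure : ∀ᵐ x ∂gammaMeasure a r, 0 ≤ x := by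
  have h_Iio : gammaMeasure a r (Iio 0) = 0 := by
    rw [gammaMeasure, withDensity_apply _ measurableSet_Iio, lintegral_gammaPDF_of_nonpos le_rfl]
  simpa [ae_iff, Iio_def] using h_Iio

lemma integral_gammaMeasure_eq (ha : 0 < a) (hr : 0 < r) (g : ℝ → ℝ) :
    ∫ x, g x ∂gammaMeasure a r
      = r ^ a / Gamma a * ∫ x in Ioi 0, x ^ (a - 1) * exp (-(r * x)) * g x := by
  have h_pdf (x : ℝ) : (gammaPDF a r x).toReal = gammaPDFReal a r x :=
    ENNReal.toReal_ofReal (gammaPDFReal_nonneg ha hr x)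
  rw [gammaMeasure, integral_withDensity_eq_integral_toReal_smul
    measurable_gammaPDF (ae_of_all _ fun _ ↦ ENNReal.ofReal_lt_top),
    ← integral_const_mul, ← setIntegral_eq_integral_of_forall_compl_eq_zero (s := Ici 0),
    integral_Ici_eq_integral_Ioi]
  · refine setIntegral_congr_fun measurableSet_Ioi fun x (hx : 0 < x) ↦ ?_
    simp only [smul_eq_mul, h_pdf, gammaPDFReal, if_pos hx.le]
    ring
  · intro x (hx : ¬ 0 ≤ x)
    simp [h_pdf, gammaPDFReal, hx]

lemma integral_rpow_gammaMeasure (ha : 0 < a) (hr : 0 < r) {s : ℝ} (has : 0 < a + s) :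
    ∫ x, x ^ s ∂gammaMeasure a r = Gamma (a + s) / (Gamma a * r ^ s) := by
  rw [integral_gammaMeasure_eq ha hr]
  have h_exp : ∀ x ∈ Ioi (0 : ℝ), x ^ (a - 1) * exp (-(r * x)) * x ^ s
      = x ^ (a + s - 1) * exp (-(r * x)) := fun x hx ↦ by
    rw [show a + s - 1 = (a - 1) + s by ring, rpow_add hx]
    ring
  rw [setIntegral_congr_fun measurableSet_Ioi h_exp, integral_rpow_mul_exp_neg_mul_Ioi has hr,
    one_div, inv_rpow hr.le, rpow_add hr]
  have := (Gamma_pos_of_pos ha).ne'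
  have := (rpow_pos_of_pos hr a).ne'
  have := (rpow_pos_of_pos hr s).ne'
  field_simp

lemma integral_sqrt_pow_gammaMeasure (ha : 0 < a) (n : ℕ) :
    ∫ x, √x ^ n ∂gammaMeasure a 1 = Gamma (a + n / 2) / Gamma a := by
  have h_rpow : (fun x : ℝ ↦ √x ^ n) =ᵐ[gammaMeasure a 1] fun x ↦ x ^ ((n : ℝ) / 2) := by
    filter_upwards [ae_nonneg_gammaMeasure] with x hx
    rw [sqrt_eq_rpow, ← rpow_natCast, ← rpow_mul hx]
    ring_nf
  rw [integral_congr_ae h_rpow, integral_rpow_gammaMeasure ha one_pos (by positivity),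
    one_rpow, mul_one]

lemma gammaPDF_mul_exp {t : ℝ} (ha : 0 < a) (hr : 0 ≤ r) (ht : t < r) (x : ℝ) :
    gammaPDF a r x * ENNReal.ofReal (exp (t * x))
      = ENNReal.ofReal ((r / (r - t)) ^ a) * gammaPDF a (r - t) x := by
  have hrt : 0 < r - t := sub_pos.2 ht
  rcases lt_or_ge x 0 with hx | hx
  · simp [gammaPDF_of_neg hx]
  rw [gammaPDF_of_nonneg hx, gammaPDF_of_nonneg hx, ← ENNReal.ofReal_mul,
    ← ENNReal.ofReal_mul (rpow_nonneg (div_nonneg hr hrt.le) a), div_rpow hr hrt.le]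
  · have := (rpow_pos_of_pos hrt a).ne'
    have h_exp : exp (-(r * x)) * exp (t * x) = exp (-((r - t) * x)) := by
      rw [← exp_add]; ring_nf
    rw [← h_exp]
    field_simp
  · have := Gamma_pos_of_pos ha
    positivity

lemma lintegral_exp_mul_gammaMeasure {t : ℝ} (ha : 0 < a) (hr : 0 ≤ r) (ht : t < r) :
    ∫⁻ x, ENNReal.ofReal (exp (t * x)) ∂gammaMeasure a r = ENNReal.ofReal ((r / (r - t)) ^ a) := by
  rw [gammaMeasure, lintegral_withDensity_eq_lintegral_mul _
    measurable_gammaPDF (by fun_prop)]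
  simp only [Pi.mul_apply, gammaPDF_mul_exp ha hr ht]
  rw [lintegral_const_mul _ measurable_gammaPDF,
    lintegral_gammaPDF_eq_one ha (sub_pos.2 ht), mul_one]

lemma integrable_exp_mul_gammaMeasure {t : ℝ} (ha : 0 < a) (hr : 0 ≤ r) (ht : t < r) :
    Integrable (fun x ↦ exp (t * x)) (gammaMeasure a r) := by
  refine ⟨by fun_prop, ?_⟩
  simp only [HasFiniteIntegral, ← ofReal_norm, norm_eq_abs, abs_exp]
  rw [lintegral_exp_mul_gammaMeasure ha hr ht]
  exact ENNReal.ofReal_lt_top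

lemma integrable_exp_mul_sqrt_gammaMeasure (ha : 0 < a) (hr : 0 < r) (c : ℝ) :
    Integrable (fun x ↦ exp (c * √x)) (gammaMeasure a r) := by
  refine ((integrable_exp_mul_gammaMeasure ha hr.le (half_lt_self hr)).const_mul
    (exp (c ^ 2 / (2 * r)))).mono' (by fun_prop) ?_
  filter_upwards [ae_nonneg_gammaMeasure] with x hx
  rw [norm_eq_abs, abs_exp, ← exp_add, exp_le_exp]
  have h_sq : c ^ 2 / (2 * r) + r / 2 * x - c * √x = (c - r * √x) ^ 2 / (2 * r) := by
    field_simp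
    linear_combination r ^ 2 * (sq_sqrt hx).symm
  have : 0 ≤ (c - r * √x) ^ 2 / (2 * r) := by positivity
  linarith

end ProbabilityTheory

/-- Moment generating function of `√X` for `X ~ Gamma(σ/2, 1)`:
`E[exp(ξ √X)] = Γ(σ/2)⁻¹ ∑_{n≥0} Γ((σ+n)/2) ξ^n / n!`. -/
theorem mgf_sqrt_gamma (σ : ℝ) (hσ : 0 < σ) (ξ : ℝ) :
    ∫ x, Real.exp (ξ * Real.sqrt x) ∂(gammaMeasure (σ / 2) 1)
      = (Real.Gamma (σ / 2))⁻¹ *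
          ∑' n : ℕ, Real.Gamma ((σ + n) / 2) * ξ ^ n / n.factorial := by
  have ha : 0 < σ / 2 := by positivity
  have h_int : Integrable (fun x ↦ exp |ξ * √x|) (gammaMeasure (σ / 2) 1) := by
    simpa only [abs_mul, abs_of_nonneg (sqrt_nonneg _)]
      using integrable_exp_mul_sqrt_gammaMeasure ha one_pos |ξ|
  rw [integral_exp_eq_tsum_integral_pow_div_factorial (by fun_prop) h_int, ← tsum_mul_left]
  refine tsum_congr fun n ↦ ?_
  simp_rw [mul_pow, integral_const_mul, integral_sqrt_pow_gammaMeasure ha n, add_div]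
  ring
end

section
/- Let $\mu_r = \frac{\Gamma(1 + (r+1)/\gamma)}{(r+1)\,\Gamma(1 + 1/\gamma)}$ denote the absolute moment of order $r$ of the probability density $f_0(x) = \mu_0 e^{-|x|^\gamma}$ on $\mathbb{R}$, where $\mu_0 = 1/(2\Gamma(1+1/\gamma))$. For $\gamma \in [1,2]$ and all integers $r \ge 2$, one has $\mu_r \le \tfrac12\, \mu_2\, r!$. -/
lemma moment_growth_aux (a : ℝ) (ha1 : 1/2 ≤ a) (ha2 : a ≤ 1) :
    ∀ r : ℕ, 2 ≤ r → Real.Gamma (1 + ((r : ℝ) + 1) * a)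
      ≤ ((r + 1).factorial : ℝ) / 6 * Real.Gamma (1 + 3 * a) := by
  intro r hr
  induction r, hr using Nat.le_induction with
  | base =>
    norm_num [Nat.factorial]
  | succ n hn ih =>
    push_cast
    have hn2 : (2 : ℝ) ≤ (n : ℝ) := by exact_mod_cast hn
    have hpos : (0 : ℝ) < 1 + ((n : ℝ) + 1) * a := by nlinarith
    have h1 : Real.Gamma (1 + ((n : ℝ) + 1 + 1) * a)
        ≤ Real.Gamma (2 + ((n : ℝ) + 1) * a) := by
      apply Real.Gamma_strictMonoOn_Ici.monotoneOn
      · simp only [Set.mem_Ici]; nlinarith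
      · simp only [Set.mem_Ici]; nlinarith
      · nlinarith
    have h2 : Real.Gamma (2 + ((n : ℝ) + 1) * a)
        = (1 + ((n : ℝ) + 1) * a) * Real.Gamma (1 + ((n : ℝ) + 1) * a) := by
      rw [show (2 : ℝ) + ((n : ℝ) + 1) * a = (1 + ((n : ℝ) + 1) * a) + 1 by ring,
        Real.Gamma_add_one hpos.ne']
    have hB : 0 ≤ Real.Gamma (1 + 3 * a) :=
      (Real.Gamma_pos_of_pos (by nlinarith)).le
    have hGnn : 0 ≤ Real.Gamma (1 + ((n : ℝ) + 1) * a) :=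
      (Real.Gamma_pos_of_pos hpos).le
    have hfact : ((n + 1 + 1).factorial : ℝ) = ((n : ℝ) + 2) * ((n + 1).factorial : ℝ) := by
      rw [Nat.factorial_succ]; push_cast; ring
    have hmul : (1 + ((n : ℝ) + 1) * a) ≤ (n : ℝ) + 2 := by nlinarith
    calc Real.Gamma (1 + ((n : ℝ) + 1 + 1) * a)
        ≤ (1 + ((n : ℝ) + 1) * a) * Real.Gamma (1 + ((n : ℝ) + 1) * a) := by
          rw [← h2]; exact h1
      _ ≤ ((n : ℝ) + 2) * (((n + 1).factorial : ℝ) / 6 * Real.Gamma (1 + 3 * a)) := by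
          nlinarith
      _ = ((n + 1 + 1).factorial : ℝ) / 6 * Real.Gamma (1 + 3 * a) := by
          rw [hfact]; ring

/-- Bernstein-type moment growth for the exponential-power density
`f₀(x) = μ₀ e^{-|x|^γ}`: with `μ_r = Γ(1+(r+1)/γ)/((r+1)Γ(1+1/γ))`, for `γ ∈ [1,2]`
and all integers `r ≥ 2`, one has `μ_r ≤ ½ μ₂ r!`. -/
theorem moment_growth (γ : ℝ) (hγ1 : 1 ≤ γ) (hγ2 : γ ≤ 2) (r : ℕ) (hr : 2 ≤ r) :
    Real.Gamma (1 + ((r : ℝ) + 1) / γ) / (((r : ℝ) + 1) * Real.Gamma (1 + 1 / γ))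
      ≤ 1 / 2 * (Real.Gamma (1 + 3 / γ) / (3 * Real.Gamma (1 + 1 / γ))) *
          (r.factorial : ℝ) := by
  have hγ0 : (0 : ℝ) < γ := by linarith
  have ha1 : 1/2 ≤ 1/γ := by rw [div_le_div_iff₀ (by norm_num) hγ0]; linarith
  have ha2 : 1/γ ≤ 1 := by rw [div_le_one hγ0]; exact hγ1
  have key := moment_growth_aux (1/γ) ha1 ha2 r hr
  have hG : 0 < Real.Gamma (1 + 1/γ) := Real.Gamma_pos_of_pos (by positivity)
  have hrpos : (0 : ℝ) < (r : ℝ) + 1 := by positivity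
  have e1 : ((r : ℝ) + 1) / γ = ((r : ℝ) + 1) * (1/γ) := by ring
  have e2 : (3 : ℝ) / γ = 3 * (1/γ) := by ring
  rw [e1, e2, div_le_iff₀ (by positivity)]
  have hfact : ((r + 1).factorial : ℝ) = ((r : ℝ) + 1) * (r.factorial : ℝ) := by
    rw [Nat.factorial_succ]; push_cast; ring
  calc Real.Gamma (1 + ((r : ℝ) + 1) * (1/γ))
      ≤ ((r + 1).factorial : ℝ) / 6 * Real.Gamma (1 + 3 * (1/γ)) := key
    _ = 1 / 2 * (Real.Gamma (1 + 3 * (1/γ)) / (3 * Real.Gamma (1 + 1 / γ))) *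
          (r.factorial : ℝ) * (((r : ℝ) + 1) * Real.Gamma (1 + 1 / γ)) := by
        rw [hfact]; field_simp; ring
end

section
/- Let $f$ be a probability density on $\mathbb{R}$ that is symmetric ($f(-x) = f(x)$) and unimodal (non-increasing on $[0,\infty)$). Then for any $L > 0$, $\sum_{\ell \in \mathbb{Z},\, \ell \ne 0} f(\ell L) \le \frac{4}{L} \int_{L/2}^\infty f(x)\, dx$. -/
open MeasureTheory Set Function

/-!
On each interval `(nL + L/2, (n+1)L]`, `n ≥ 0`, the antitone function `f` is at least
`f((n+1)L)`, so `f((n+1)L) ≤ (2/L) ∫_{nL+L/2}^{(n+1)L} f`. These intervals are disjoint and lie in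
`[L/2, ∞)`, whence `∑_{ℓ ≥ 1} f(ℓL) ≤ (2/L) ∫_{L/2}^∞ f`; symmetry doubles this for `ℓ ≤ -1`.
-/

theorem AntitoneOn.mul_le_setIntegral_Ioc {f : ℝ → ℝ} {a b : ℝ} (hab : a ≤ b)
    (hf : AntitoneOn f (Icc a b)) (hint : IntegrableOn f (Ioc a b)) :
    (b - a) * f b ≤ ∫ x in Ioc a b, f x := by
  have hfb : ∀ x ∈ Ioc a b, f b ≤ f x := fun x hx =>
    hf (Ioc_subset_Icc_self hx) (right_mem_Icc.2 hab) hx.2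
  simpa [Real.volume_real_Ioc_of_le hab, mul_comm] using
    setIntegral_ge_of_const_le_real measurableSet_Ioc measure_Ioc_lt_top.ne hfb hint

theorem summable_and_tsum_le_setIntegral_of_pairwise_disjoint {α ι : Type*} [Countable ι]
    [MeasurableSpace α] {μ : Measure α} {f : α → ℝ} {g : ι → ℝ} {s : ι → Set α} {t : Set α}
    (hg0 : ∀ i, 0 ≤ g i) (hg : ∀ i, g i ≤ ∫ x in s i, f x ∂μ)
    (hs : ∀ i, MeasurableSet (s i)) (hdisj : Pairwise (Disjoint on s)) (hst : ∀ i, s i ⊆ t)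
    (hf : IntegrableOn f t μ) (hf0 : 0 ≤ᵐ[μ.restrict t] f) :
    Summable g ∧ ∑' i, g i ≤ ∫ x in t, f x ∂μ := by
  have hUnion : HasSum (fun i => ∫ x in s i, f x ∂μ) (∫ x in ⋃ i, s i, f x ∂μ) :=
    hasSum_integral_iUnion hs hdisj (hf.mono_set (iUnion_subset hst))
  have hsum : Summable g := hUnion.summable.of_nonneg_of_le hg0 hg
  refine ⟨hsum, ?_⟩
  calc ∑' i, g i ≤ ∫ x in ⋃ i, s i, f x ∂μ := hasSum_le hg hsum.hasSum hUnion
    _ ≤ ∫ x in t, f x ∂μ :=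
      setIntegral_mono_set hf hf0 (Filter.Eventually.of_forall (iUnion_subset hst))

theorem AntitoneOn.summable_and_tsum_le_setIntegral_Ici {f : ℝ → ℝ} {L : ℝ} (hL : 0 < L)
    (hf : AntitoneOn f (Ici (L / 2))) (hf0 : ∀ x ∈ Ici (L / 2), 0 ≤ f x)
    (hint : IntegrableOn f (Ici (L / 2))) :
    Summable (fun n : ℕ => f ((n + 1) * L)) ∧
      ∑' n : ℕ, f ((n + 1) * L) ≤ 2 / L * ∫ x in Ici (L / 2), f x := by
  set s : ℕ → Set ℝ := fun n => Ioc ((n + 1) * L - L / 2) ((n + 1) * L)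
  have hIcc : ∀ n : ℕ, Icc ((n + 1) * L - L / 2) ((n + 1) * L) ⊆ Ici (L / 2) := by
    intro n x hx
    have : (0 : ℝ) ≤ n * L := by positivity
    exact mem_Ici.2 (by linarith [hx.1])
  have hs : ∀ n, s n ⊆ Ici (L / 2) := fun n => Ioc_subset_Icc_self.trans (hIcc n)
  have hdisj : Pairwise (Disjoint on s) := by
    refine (pairwise_disjoint_on s).2 fun m n hmn => ?_
    have : (m + 1 : ℝ) ≤ n := by exact_mod_cast hmn
    refine Ioc_disjoint_Ioc_of_le ?_
    nlinarith
  have hle : ∀ n : ℕ, L / 2 * f ((n + 1) * L) ≤ ∫ x in s n, f x := fun n => by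
    simpa using (hf.mono (hIcc n)).mul_le_setIntegral_Ioc (by linarith) (hint.mono_set (hs n))
  obtain ⟨hsum, htsum⟩ := summable_and_tsum_le_setIntegral_of_pairwise_disjoint
    (fun n => mul_nonneg (by positivity) (hf0 _ (hIcc n (right_mem_Icc.2 (by linarith)))))
    hle (fun _ => measurableSet_Ioc) hdisj hs hint
    (ae_restrict_of_forall_mem measurableSet_Ici hf0)
  refine ⟨(summable_mul_left_iff (by positivity)).1 hsum, ?_⟩
  rw [tsum_mul_left] at htsum
  calc ∑' n : ℕ, f ((n + 1) * L) = 2 / L * (L / 2 * ∑' n : ℕ, f ((n + 1) * L)) := by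
        rw [← mul_assoc, div_mul_div_comm, mul_comm 2 L, div_self (by positivity), one_mul]
    _ ≤ 2 / L * ∫ x in Ici (L / 2), f x := by gcongr

theorem sum_le_tail_integral_general (f : ℝ → ℝ) (hint : Integrable f)
    (hnonneg : ∀ x, 0 ≤ f x)
    (hsymm : ∀ x, f (-x) = f x) (hmono : AntitoneOn f (Set.Ici 0))
    (L : ℝ) (hL : 0 < L) :
    Summable (fun ℓ : ℤ => if ℓ = 0 then 0 else f ((ℓ : ℝ) * L)) ∧
    (∑' ℓ : ℤ, if ℓ = 0 then 0 else f ((ℓ : ℝ) * L))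
      ≤ 4 / L * ∫ x in Set.Ici (L / 2), f x := by
  obtain ⟨hsum, hle⟩ := AntitoneOn.summable_and_tsum_le_setIntegral_Ici hL
    (hmono.mono (Ici_subset_Ici.2 (by positivity))) (fun x _ => hnonneg x) hint.integrableOn
  set F : ℤ → ℝ := fun ℓ => if ℓ = 0 then 0 else f (ℓ * L)
  have hpos : (fun n : ℕ => F (n + 1)) = fun n : ℕ => f ((n + 1) * L) := by
    funext n
    simp only [F, if_neg (by omega : (n : ℤ) + 1 ≠ 0)]
    push_cast
    rfl
  have hneg : (fun n : ℕ => F (-(n + 1))) = fun n : ℕ => f ((n + 1) * L) := by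
    funext n
    simp only [F, if_neg (by omega : -((n : ℤ) + 1) ≠ 0)]
    rw [← hsymm]
    push_cast
    ring_nf
  have hF : HasSum F (∑' n : ℕ, f ((n + 1) * L) + F 0 + ∑' n : ℕ, f ((n + 1) * L)) :=
    .of_add_one_of_neg_add_one (hpos ▸ hsum.hasSum) (hneg ▸ hsum.hasSum)
  refine ⟨hF.summable, ?_⟩
  have hrhs : 4 / L * ∫ x in Ici (L / 2), f x = 2 * (2 / L * ∫ x in Ici (L / 2), f x) := by ring
  have hF0 : F 0 = 0 := if_pos rfl
  rw [hF.tsum_eq, hF0, hrhs]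
  linarith

/-- For a symmetric unimodal probability density `f` on `ℝ` and any `L > 0`,
`∑_{ℓ ∈ ℤ, ℓ ≠ 0} f(ℓL) ≤ (4/L) ∫_{L/2}^∞ f(x) dx`. -/
theorem sum_le_tail_integral (f : ℝ → ℝ) (hint : Integrable f)
    (hnonneg : ∀ x, 0 ≤ f x) (hprob : ∫ x, f x = 1)
    (hsymm : ∀ x, f (-x) = f x) (hmono : AntitoneOn f (Set.Ici 0))
    (L : ℝ) (hL : 0 < L) :
    Summable (fun ℓ : ℤ => if ℓ = 0 then 0 else f ((ℓ : ℝ) * L)) ∧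
    (∑' ℓ : ℤ, if ℓ = 0 then 0 else f ((ℓ : ℝ) * L))
      ≤ 4 / L * ∫ x in Set.Ici (L / 2), f x :=
  sum_le_tail_integral_general f hint hnonneg hsymm hmono L hL
end

section
/- Let $\tilde\nu \in (0,1]$, and let $(U_n)_{n\ge1}$ and $(B_n)_{n\ge1}$ be independent sequences of i.i.d. random variables, with $U_n$ uniform on $[0,1]$ and $B_n$ having Beta$(1,\theta^*)$ distribution for some $\theta^* > 0$. Define recursively $\eta_0 = 1$, $\xi_n = \mathbf{1}\{U_n \le \tilde\nu \eta_{n-1}/(1 - \tilde\nu + \tilde\nu \eta_{n-1})\}$, $D_n = \xi_n B_n$, $\eta_n = \prod_{j=1}^n (1 - D_j)$, and $X_n = \eta_{n-1} D_n$. Then almost surely $\sum_{j=1}^n X_j = 1 - \eta_n$ for each $n$, and $\sum_{j=1}^\infty X_j = 1$ almost surely. -/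
open MeasureTheory ProbabilityTheory
open scoped BigOperators ENNReal

/-- `sbEta ν U B n` is the remaining-stick variable `η_n` of the modified stick-breaking
process: `η_0 = 1`, `η_n = η_{n-1}(1 - D_n)` with `D_n = ξ_n B_n` and
`ξ_n = 1{U_n ≤ ν η_{n-1}/(1-ν+ν η_{n-1})}` (here `U (n-1), B (n-1)` play the role of
the paper's `U_n, B_n`). -/
noncomputable def sbEta (ν : ℝ) {Ω : Type*} (U B : ℕ → Ω → ℝ) : ℕ → Ω → ℝ
  | 0 => fun _ => 1
  | n + 1 => fun ω =>
      sbEta ν U B n ω *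
        (1 - if U n ω ≤ ν * sbEta ν U B n ω / (1 - ν + ν * sbEta ν U B n ω)
             then B n ω else 0)

/-- `sbX ν U B n = X_{n+1} = η_n D_{n+1}` of the modified stick-breaking process. -/
noncomputable def sbX (ν : ℝ) {Ω : Type*} (U B : ℕ → Ω → ℝ) (n : ℕ) (ω : Ω) : ℝ :=
  sbEta ν U B n ω *
    (if U n ω ≤ ν * sbEta ν U B n ω / (1 - ν + ν * sbEta ν U B n ω)
     then B n ω else 0)

/-!
The partial sums telescope, `X_{n+1} = η_n - η_{n+1}`, so it suffices that `η_n → 0` a.s.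
Write `p(e) = ν e / (1 - ν + ν e)` for the breaking probability. As `U_{n+1}` is uniform and
independent of `η_n`, and `B_{n+1}` is independent of `η_n ξ_{n+1}`, the means `a_n = E[η_n]`
satisfy `a_{n+1} = a_n - E[η_n p(η_n)] E[B_{n+1}]`. Since `e p(e) ≥ ν e²` on `[0,1]`, Jensen and
Markov's inequality give `a_{n+1} ≤ a_n - c a_n²` with `c > 0`, whence `a_n → 0`. As `η_n` is
nonnegative and nonincreasing, its pointwise limit has mean `0` and so vanishes a.s.
-/

open Filter Set Topology

theorem tendsto_zero_of_le_sub_mul_sq {a : ℕ → ℝ} {c : ℝ} (hc : 0 < c) (h0 : ∀ n, 0 ≤ a n)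
    (hrec : ∀ n, a (n + 1) ≤ a n - c * a n ^ 2) :
    Tendsto a atTop (𝓝 0) := by
  have hanti : Antitone a := antitone_nat_of_succ_le fun n => by
    nlinarith [hrec n, sq_nonneg (a n)]
  have hlim : Tendsto a atTop (𝓝 (⨅ n, a n)) :=
    tendsto_atTop_ciInf hanti ⟨0, by rintro x ⟨n, rfl⟩; exact h0 n⟩
  have hfix : ⨅ n, a n ≤ (⨅ n, a n) - c * (⨅ n, a n) ^ 2 :=
    le_of_tendsto_of_tendsto' (hlim.comp (tendsto_add_atTop_nat 1))
      (hlim.sub (tendsto_const_nhds.mul (hlim.pow 2))) hrec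
  have hzero : ⨅ n, a n = 0 := by
    by_contra hne
    have hpos : 0 < ⨅ n, a n := lt_of_le_of_ne (le_ciInf h0) (Ne.symm hne)
    nlinarith [mul_pos hc (pow_pos hpos 2)]
  rwa [hzero] at hlim

theorem measurable_biSup_comap {Ω ι β : Type*} [mβ : MeasurableSpace β] (f : ι → Ω → β)
    {s : Set ι} {i : ι} (hi : i ∈ s) : Measurable[⨆ j ∈ s, mβ.comap (f j)] (f i) :=
  measurable_iff_comap_le.mpr (le_biSup (fun j => mβ.comap (f j)) hi)

section Probability

variable {Ω : Type*} [MeasurableSpace Ω] {μ : Measure Ω}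

theorem sq_integral_le_integral_sq [IsProbabilityMeasure μ] {X : Ω → ℝ} (hX : MemLp X 2 μ) :
    (∫ ω, X ω ∂μ) ^ 2 ≤ ∫ ω, X ω ^ 2 ∂μ := by
  have h := variance_nonneg X μ
  rw [variance_eq_sub hX] at h
  simp only [Pi.pow_apply] at h
  linarith

theorem ae_tendsto_zero_of_antitone_of_tendsto_integral {f : ℕ → Ω → ℝ}
    (hf : ∀ n, Measurable (f n)) (hint : ∀ n, Integrable (f n) μ) (hnn : ∀ n ω, 0 ≤ f n ω)
    (hanti : ∀ ω, Antitone (f · ω))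
    (hlim : Tendsto (fun n => ∫ ω, f n ω ∂μ) atTop (𝓝 0)) :
    ∀ᵐ ω ∂μ, Tendsto (f · ω) atTop (𝓝 0) := by
  set l : Ω → ℝ := fun ω => ⨅ n, f n ω
  have hbdd (ω : Ω) : BddBelow (range (f · ω)) := ⟨0, by rintro x ⟨n, rfl⟩; exact hnn n ω⟩
  have hl_nonneg (ω : Ω) : 0 ≤ l ω := le_ciInf (hnn · ω)
  have hl_le (n : ℕ) (ω : Ω) : l ω ≤ f n ω := ciInf_le (hbdd ω) n
  have hl_int : Integrable l μ :=
    (hint 0).mono' (Measurable.iInf hf).aestronglyMeasurable <| ae_of_all _ fun ω => by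
      rw [Real.norm_of_nonneg (hl_nonneg ω)]; exact hl_le 0 ω
  have hl_integral : ∫ ω, l ω ∂μ = 0 :=
    le_antisymm (ge_of_tendsto' hlim fun n => integral_mono hl_int (hint n) (hl_le n))
      (integral_nonneg hl_nonneg)
  have hl_ae : l =ᵐ[μ] 0 := (integral_eq_zero_iff_of_nonneg hl_nonneg hl_int).mp hl_integral
  filter_upwards [hl_ae] with ω hω
  simpa [l, hω] using tendsto_atTop_ciInf (hanti ω) (hbdd ω)

theorem ProbabilityTheory.IndepFun.integral_mul_ite_le_eq_integral_mul [IsFiniteMeasure μ]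
    {X V : Ω → ℝ} {p : ℝ → ℝ} (hind : IndepFun X V μ) (hX : Measurable X) (hV : Measurable V)
    (hp : Measurable p) (hXint : Integrable X μ) (hpX : ∀ ω, p (X ω) ∈ Icc (0 : ℝ) 1)
    (hVd : ∀ x ∈ Icc (0 : ℝ) 1, μ {ω | V ω ≤ x} = ENNReal.ofReal x) :
    ∫ ω, X ω * (if V ω ≤ p (X ω) then 1 else 0) ∂μ = ∫ ω, X ω * p (X ω) ∂μ := by
  set f : ℝ × ℝ → ℝ := fun q => q.1 * if q.2 ≤ p q.1 then 1 else 0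
  have hf : Measurable f := measurable_fst.mul <|
    Measurable.ite (measurableSet_le measurable_snd (hp.comp measurable_fst))
      measurable_const measurable_const
  have hpair : Measurable fun ω => (X ω, V ω) := hX.prodMk hV
  have hmap : μ.map (fun ω => (X ω, V ω)) = (μ.map X).prod (μ.map V) :=
    (indepFun_iff_map_prod_eq_prod_map_map hX.aemeasurable hV.aemeasurable).mp hind
  have hf_int : Integrable f ((μ.map X).prod (μ.map V)) := by
    rw [← hmap, integrable_map_measure hf.aestronglyMeasurable hpair.aemeasurable]
    refine hXint.mono (hf.comp hpair).aestronglyMeasurable (ae_of_all _ fun ω => ?_)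
    simp only [Function.comp_apply, f, norm_mul]
    split_ifs <;> simp
  have hinner : ∀ᵐ x ∂(μ.map X), ∫ u, f (x, u) ∂(μ.map V) = x * p x := by
    have hpx : ∀ᵐ x ∂(μ.map X), p x ∈ Icc (0 : ℝ) 1 :=
      (ae_map_iff hX.aemeasurable (hp measurableSet_Icc)).mpr (ae_of_all _ hpX)
    filter_upwards [hpx] with x hx
    have hind_eq : (fun u => if u ≤ p x then (1 : ℝ) else 0) = (Iic (p x)).indicator 1 := by
      ext u; simp [indicator_apply]
    simp only [f]
    rw [integral_const_mul, hind_eq, integral_indicator_one measurableSet_Iic, measureReal_def,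
      Measure.map_apply hV measurableSet_Iic]
    simp only [preimage, mem_Iic]
    rw [hVd _ hx, ENNReal.toReal_ofReal hx.1]
  calc ∫ ω, X ω * (if V ω ≤ p (X ω) then 1 else 0) ∂μ
      = ∫ q, f q ∂((μ.map X).prod (μ.map V)) := by
        rw [← hmap, integral_map hpair.aemeasurable hf.aestronglyMeasurable]
    _ = ∫ x, x * p x ∂(μ.map X) := by
        rw [integral_prod f hf_int, integral_congr_ae hinner]
    _ = ∫ ω, X ω * p (X ω) ∂μ :=
        integral_map hX.aemeasurable (measurable_id.mul hp).aestronglyMeasurable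

/-- Markov's inequality at `1/2` for a `Beta(1, θ)` variable. -/
theorem le_integral_of_beta_one_cdf [IsProbabilityMeasure μ] {W : Ω → ℝ} {θ : ℝ} (hθ : 0 < θ)
    (hW : Measurable W) (hWr : ∀ ω, W ω ∈ Icc (0 : ℝ) 1)
    (hWd : ∀ x ∈ Icc (0 : ℝ) 1, μ {ω | W ω ≤ x} = ENNReal.ofReal (1 - (1 - x) ^ θ)) :
    1 / 2 * (1 / 2) ^ θ ≤ ∫ ω, W ω ∂μ := by
  have hhalf : (1 / 2 : ℝ) ^ θ ≤ 1 := Real.rpow_le_one (by norm_num) (by norm_num) hθ.le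
  have hle_half : μ.real {ω | W ω ≤ 1 / 2} = 1 - (1 / 2) ^ θ := by
    rw [measureReal_def, hWd _ (by norm_num), ENNReal.toReal_ofReal (by norm_num; linarith)]
    norm_num
  have htail : (1 / 2 : ℝ) ^ θ ≤ μ.real {ω | 1 / 2 ≤ W ω} := by
    calc (1 / 2 : ℝ) ^ θ = μ.real {ω | W ω ≤ 1 / 2}ᶜ := by
          rw [probReal_compl_eq_one_sub (measurableSet_le hW measurable_const), hle_half]; ring
      _ ≤ μ.real {ω | 1 / 2 ≤ W ω} :=
          measureReal_mono fun ω (hω : ¬W ω ≤ 1 / 2) => (lt_of_not_ge hω).le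
  calc 1 / 2 * (1 / 2) ^ θ ≤ 1 / 2 * μ.real {ω | 1 / 2 ≤ W ω} := by gcongr
    _ ≤ ∫ ω, W ω ∂μ :=
        mul_meas_ge_le_integral_of_nonneg (ae_of_all _ fun ω => (hWr ω).1)
          (Integrable.of_mem_Icc 0 1 hW.aemeasurable (ae_of_all _ hWr)) _

theorem ProbabilityTheory.iIndepFun.indepFun_of_measurable_biSup {ι β γ γ' : Type*}
    [mβ : MeasurableSpace β] [MeasurableSpace γ] [MeasurableSpace γ'] {f : ι → Ω → β}
    (h : iIndepFun f μ) (hf : ∀ i, Measurable (f i)) {s t : Set ι} (hst : Disjoint s t)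
    {X : Ω → γ} {Y : Ω → γ'} (hX : Measurable[⨆ i ∈ s, mβ.comap (f i)] X)
    (hY : Measurable[⨆ i ∈ t, mβ.comap (f i)] Y) :
    IndepFun X Y μ := by
  rw [IndepFun_iff_Indep]
  exact indep_of_indep_of_le_left
    (indep_of_indep_of_le_right
      (indep_iSup_of_disjoint (fun i => (hf i).comap_le) ((iIndepFun_iff_iIndep _ _ _).mp h) hst)
      hY.comap_le)
    hX.comap_le

end Probability

noncomputable def sbBreakProb (ν e : ℝ) : ℝ := ν * e / (1 - ν + ν * e)

/-- The indicator `ξ_{n+1}` of the paper. -/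
noncomputable def sbXi (ν : ℝ) {Ω : Type*} (U B : ℕ → Ω → ℝ) (n : ℕ) (ω : Ω) : ℝ :=
  if U n ω ≤ sbBreakProb ν (sbEta ν U B n ω) then 1 else 0

theorem measurable_sbBreakProb (ν : ℝ) : Measurable (sbBreakProb ν) := by
  unfold sbBreakProb; fun_prop

section BreakProb

variable {ν e : ℝ}

theorem sbBreakProb_mem_Icc (hν0 : 0 ≤ ν) (hν1 : ν ≤ 1) (he : e ∈ Icc (0 : ℝ) 1) :
    sbBreakProb ν e ∈ Icc (0 : ℝ) 1 := by
  have hden : 0 ≤ 1 - ν + ν * e := by nlinarith [he.1]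
  exact ⟨div_nonneg (by nlinarith [he.1]) hden, div_le_one_of_le₀ (by linarith) hden⟩

theorem mul_sq_le_mul_sbBreakProb (hν0 : 0 < ν) (hν1 : ν ≤ 1) (he : e ∈ Icc (0 : ℝ) 1) :
    ν * e ^ 2 ≤ e * sbBreakProb ν e := by
  rcases he.1.eq_or_lt with rfl | hpos
  · simp [sbBreakProb]
  have hden : 0 < 1 - ν + ν * e := by nlinarith
  rw [sbBreakProb, ← mul_div_assoc, le_div_iff₀ hden]
  nlinarith [mul_nonneg (sq_nonneg (ν * e)) (sub_nonneg.mpr he.2)]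

end BreakProb

section StickBreaking

variable {Ω : Type*} {ν : ℝ} {U B : ℕ → Ω → ℝ}

theorem sbEta_succ (n : ℕ) (ω : Ω) :
    sbEta ν U B (n + 1) ω = sbEta ν U B n ω * (1 - sbXi ν U B n ω * B n ω) := by
  rw [sbXi, boole_mul]; rfl

theorem sbX_eq (n : ℕ) (ω : Ω) :
    sbX ν U B n ω = sbEta ν U B n ω * (sbXi ν U B n ω * B n ω) := by
  rw [sbXi, boole_mul]; rfl

theorem sum_range_sbX (n : ℕ) (ω : Ω) :
    ∑ k ∈ Finset.range n, sbX ν U B k ω = 1 - sbEta ν U B n ω := by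
  induction n with
  | zero => simp [sbEta]
  | succ n ih => rw [Finset.sum_range_succ, ih, sbEta_succ, sbX_eq]; ring

theorem sbXi_mul_mem_Icc (hBr : ∀ n ω, B n ω ∈ Icc (0 : ℝ) 1) (n : ℕ) (ω : Ω) :
    sbXi ν U B n ω * B n ω ∈ Icc (0 : ℝ) 1 := by
  unfold sbXi; split_ifs
  · simpa using hBr n ω
  · simp

theorem sbEta_mem_Icc (hBr : ∀ n ω, B n ω ∈ Icc (0 : ℝ) 1) (n : ℕ) (ω : Ω) :
    sbEta ν U B n ω ∈ Icc (0 : ℝ) 1 := by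
  induction n with
  | zero => simp [sbEta]
  | succ n ih =>
    have hD := sbXi_mul_mem_Icc (ν := ν) (U := U) hBr n ω
    rw [sbEta_succ]
    exact unitInterval.mul_mem ih ⟨by linarith [hD.2], by linarith [hD.1]⟩

theorem sbEta_antitone (hBr : ∀ n ω, B n ω ∈ Icc (0 : ℝ) 1) (ω : Ω) :
    Antitone (sbEta ν U B · ω) :=
  antitone_nat_of_succ_le fun n => by
    rw [sbEta_succ]
    have hη := sbEta_mem_Icc (ν := ν) (U := U) hBr n ω
    have hD := sbXi_mul_mem_Icc (ν := ν) (U := U) hBr n ω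
    nlinarith [hη.1, hD.1]

theorem hasSum_sbX_of_tendsto_sbEta (hBr : ∀ n ω, B n ω ∈ Icc (0 : ℝ) 1) {ω : Ω}
    (h : Tendsto (sbEta ν U B · ω) atTop (𝓝 0)) : HasSum (sbX ν U B · ω) 1 := by
  have hX (n : ℕ) : 0 ≤ sbX ν U B n ω := by
    rw [sbX_eq]
    exact (unitInterval.mul_mem (sbEta_mem_Icc hBr n ω) (sbXi_mul_mem_Icc hBr n ω)).1
  rw [hasSum_iff_tendsto_nat_of_nonneg hX]
  simp_rw [sum_range_sbX]
  simpa using (tendsto_const_nhds (x := (1 : ℝ))).sub h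

theorem measurable_sbXi {m : MeasurableSpace Ω} {n : ℕ} (hη : Measurable[m] (sbEta ν U B n))
    (hU : Measurable[m] (U n)) : Measurable[m] (sbXi ν U B n) :=
  Measurable.ite (measurableSet_le hU ((measurable_sbBreakProb ν).comp hη))
    measurable_const measurable_const

theorem measurable_sbEta {m : MeasurableSpace Ω} (n : ℕ) (hU : ∀ k < n, Measurable[m] (U k))
    (hB : ∀ k < n, Measurable[m] (B k)) : Measurable[m] (sbEta ν U B n) := by
  induction n with
  | zero => exact measurable_const
  | succ n ih =>
    have hη := ih (fun k hk => hU k (by omega)) (fun k hk => hB k (by omega))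
    simp_rw [funext (sbEta_succ (ν := ν) (U := U) (B := B) n)]
    exact hη.mul (measurable_const.sub
      ((measurable_sbXi hη (hU n n.lt_succ_self)).mul (hB n n.lt_succ_self)))

end StickBreaking

section Means

variable {Ω : Type*} [MeasurableSpace Ω] {μ : Measure Ω} {ν : ℝ} {U B : ℕ → Ω → ℝ}

theorem indepFun_sbEta_U (hindep : iIndepFun (Sum.elim U B) μ) (hU : ∀ n, Measurable (U n))
    (hB : ∀ n, Measurable (B n)) (n : ℕ) : IndepFun (sbEta ν U B n) (U n) μ := by
  have hUB : ∀ i, Measurable (Sum.elim U B i) := by rintro (k | k) <;> simp [hU, hB]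
  have hη : Measurable[⨆ j ∈ ({Sum.inl n}ᶜ : Set (ℕ ⊕ ℕ)),
      MeasurableSpace.comap (Sum.elim U B j) inferInstance] (sbEta ν U B n) := by
    refine measurable_sbEta n (fun k hk => ?_) (fun k _ => ?_)
    · exact measurable_biSup_comap (Sum.elim U B) (i := Sum.inl k) (by simp; omega)
    · exact measurable_biSup_comap (Sum.elim U B) (i := Sum.inr k) (by simp)
  exact hindep.indepFun_of_measurable_biSup hUB disjoint_compl_left hη
    (measurable_biSup_comap (Sum.elim U B) (i := Sum.inl n) rfl)

theorem indepFun_sbEta_mul_sbXi_B (hindep : iIndepFun (Sum.elim U B) μ)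
    (hU : ∀ n, Measurable (U n)) (hB : ∀ n, Measurable (B n)) (n : ℕ) :
    IndepFun (fun ω => sbEta ν U B n ω * sbXi ν U B n ω) (B n) μ := by
  have hUB : ∀ i, Measurable (Sum.elim U B i) := by rintro (k | k) <;> simp [hU, hB]
  have hU' (k : ℕ) : Measurable[⨆ j ∈ ({Sum.inr n}ᶜ : Set (ℕ ⊕ ℕ)),
      MeasurableSpace.comap (Sum.elim U B j) inferInstance] (U k) :=
    measurable_biSup_comap (Sum.elim U B) (i := Sum.inl k) (by simp)
  have hη : Measurable[⨆ j ∈ ({Sum.inr n}ᶜ : Set (ℕ ⊕ ℕ)),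
      MeasurableSpace.comap (Sum.elim U B j) inferInstance] (sbEta ν U B n) := by
    refine measurable_sbEta n (fun k _ => hU' k) (fun k hk => ?_)
    exact measurable_biSup_comap (Sum.elim U B) (i := Sum.inr k) (by simp; omega)
  exact hindep.indepFun_of_measurable_biSup hUB disjoint_compl_left
    (hη.mul (measurable_sbXi hη (hU' n)))
    (measurable_biSup_comap (Sum.elim U B) (i := Sum.inr n) rfl)

variable [IsProbabilityMeasure μ]

theorem integral_sbEta_succ (hindep : iIndepFun (Sum.elim U B) μ) (hU : ∀ n, Measurable (U n))
    (hB : ∀ n, Measurable (B n)) (hBr : ∀ n ω, B n ω ∈ Icc (0 : ℝ) 1) (n : ℕ) :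
    ∫ ω, sbEta ν U B (n + 1) ω ∂μ = ∫ ω, sbEta ν U B n ω ∂μ -
      (∫ ω, sbEta ν U B n ω * sbXi ν U B n ω ∂μ) * ∫ ω, B n ω ∂μ := by
  have hη := measurable_sbEta (ν := ν) n (fun k _ => hU k) (fun k _ => hB k)
  have hηξ := hη.mul (measurable_sbXi hη (hU n))
  have hD (ω : Ω) := sbXi_mul_mem_Icc (ν := ν) (U := U) hBr n ω
  have hηξB_int : Integrable (fun ω => sbEta ν U B n ω * sbXi ν U B n ω * B n ω) μ := by
    refine Integrable.of_mem_Icc 0 1 (hηξ.mul (hB n)).aemeasurable (ae_of_all _ fun ω => ?_)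
    rw [mul_assoc]
    exact unitInterval.mul_mem (sbEta_mem_Icc hBr n ω) (hD ω)
  calc ∫ ω, sbEta ν U B (n + 1) ω ∂μ
      = ∫ ω, sbEta ν U B n ω - sbEta ν U B n ω * sbXi ν U B n ω * B n ω ∂μ := by
        simp_rw [sbEta_succ]; ring_nf
    _ = _ := by
        rw [integral_sub (Integrable.of_mem_Icc 0 1 hη.aemeasurable
            (ae_of_all _ (sbEta_mem_Icc hBr n))) hηξB_int,
          (indepFun_sbEta_mul_sbXi_B hindep hU hB n).integral_fun_mul_eq_mul_integral
            hηξ.aestronglyMeasurable (hB n).aestronglyMeasurable]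

theorem mul_sq_integral_sbEta_le (hν0 : 0 < ν) (hν1 : ν ≤ 1)
    (hindep : iIndepFun (Sum.elim U B) μ) (hU : ∀ n, Measurable (U n))
    (hB : ∀ n, Measurable (B n)) (hBr : ∀ n ω, B n ω ∈ Icc (0 : ℝ) 1)
    (hUd : ∀ n, ∀ x ∈ Icc (0 : ℝ) 1, μ {ω | U n ω ≤ x} = ENNReal.ofReal x) (n : ℕ) :
    ν * (∫ ω, sbEta ν U B n ω ∂μ) ^ 2 ≤ ∫ ω, sbEta ν U B n ω * sbXi ν U B n ω ∂μ := by
  have hη := measurable_sbEta (ν := ν) n (fun k _ => hU k) (fun k _ => hB k)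
  have hηr := sbEta_mem_Icc (ν := ν) (U := U) hBr n
  have hp (ω : Ω) := sbBreakProb_mem_Icc hν0.le hν1 (hηr ω)
  have hη_int : Integrable (fun ω => sbEta ν U B n ω ^ 2) μ :=
    Integrable.of_mem_Icc 0 1 (hη.pow_const 2).aemeasurable
      (ae_of_all _ fun ω => sq (sbEta ν U B n ω) ▸ unitInterval.mul_mem (hηr ω) (hηr ω))
  calc ν * (∫ ω, sbEta ν U B n ω ∂μ) ^ 2
      ≤ ν * ∫ ω, sbEta ν U B n ω ^ 2 ∂μ := by
        gcongr
        exact sq_integral_le_integral_sq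
          (MemLp.of_bound hη.aestronglyMeasurable 1 (ae_of_all _ fun ω => by
            rw [Real.norm_of_nonneg (hηr ω).1]; exact (hηr ω).2))
    _ = ∫ ω, ν * sbEta ν U B n ω ^ 2 ∂μ := (integral_const_mul ν _).symm
    _ ≤ ∫ ω, sbEta ν U B n ω * sbBreakProb ν (sbEta ν U B n ω) ∂μ :=
        integral_mono (hη_int.const_mul ν)
          (Integrable.of_mem_Icc 0 1 (hη.mul ((measurable_sbBreakProb ν).comp hη)).aemeasurable
            (ae_of_all _ fun ω => unitInterval.mul_mem (hηr ω) (hp ω)))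
          fun ω => mul_sq_le_mul_sbBreakProb hν0 hν1 (hηr ω)
    _ = ∫ ω, sbEta ν U B n ω * sbXi ν U B n ω ∂μ :=
        ((indepFun_sbEta_U hindep hU hB n).integral_mul_ite_le_eq_integral_mul hη (hU n)
          (measurable_sbBreakProb ν)
          (Integrable.of_mem_Icc 0 1 hη.aemeasurable (ae_of_all _ hηr)) hp (hUd n)).symm

end Means

theorem sb_sum_eq_one_general {Ω : Type*} [MeasurableSpace Ω] (μ : Measure Ω)
    [IsProbabilityMeasure μ]
    (ν θ : ℝ) (hν0 : 0 < ν) (hν1 : ν ≤ 1) (hθ : 0 < θ)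
    (U B : ℕ → Ω → ℝ)
    (hU : ∀ n, Measurable (U n)) (hB : ∀ n, Measurable (B n))
    (hBr : ∀ n ω, B n ω ∈ Set.Icc (0 : ℝ) 1)
    (hUd : ∀ n, ∀ x ∈ Set.Icc (0 : ℝ) 1,
      μ {ω | U n ω ≤ x} = ENNReal.ofReal x)
    (hBd : ∀ n, ∀ x ∈ Set.Icc (0 : ℝ) 1,
      μ {ω | B n ω ≤ x} = ENNReal.ofReal (1 - (1 - x) ^ θ))
    (hindep : iIndepFun (Sum.elim U B) μ) :
    (∀ n ω, ∑ k ∈ Finset.range n, sbX ν U B k ω = 1 - sbEta ν U B n ω) ∧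
    (∀ᵐ ω ∂μ, HasSum (fun n => sbX ν U B n ω) 1) := by
  refine ⟨sum_range_sbX, ?_⟩
  set a : ℕ → ℝ := fun n => ∫ ω, sbEta ν U B n ω ∂μ
  set c : ℝ := 1 / 2 * (1 / 2) ^ θ
  have hc : 0 < c := by positivity
  have ha_rec (n : ℕ) : a (n + 1) ≤ a n - ν * c * a n ^ 2 := by
    have hBc : c ≤ ∫ ω, B n ω ∂μ := le_integral_of_beta_one_cdf hθ (hB n) (hBr n) (hBd n)
    have hsq := mul_sq_integral_sbEta_le hν0 hν1 hindep hU hB hBr hUd n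
    simp only [a, integral_sbEta_succ hindep hU hB hBr n]
    nlinarith [mul_le_mul hsq hBc hc.le ((mul_nonneg hν0.le (sq_nonneg _)).trans hsq)]
  have hη_meas (n : ℕ) := measurable_sbEta (ν := ν) n (fun k _ => hU k) (fun k _ => hB k)
  have hη_lim : ∀ᵐ ω ∂μ, Tendsto (sbEta ν U B · ω) atTop (𝓝 0) :=
    ae_tendsto_zero_of_antitone_of_tendsto_integral hη_meas
      (fun n => Integrable.of_mem_Icc 0 1 (hη_meas n).aemeasurable
        (ae_of_all _ (sbEta_mem_Icc hBr n)))
      (fun n ω => (sbEta_mem_Icc hBr n ω).1) (sbEta_antitone hBr)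
      (tendsto_zero_of_le_sub_mul_sq (by positivity) (fun n => integral_nonneg
        fun ω => (sbEta_mem_Icc hBr n ω).1) ha_rec)
  filter_upwards [hη_lim] with ω hω
  exact hasSum_sbX_of_tendsto_sbEta hBr hω

/-- In the modified stick-breaking process (with `(U_n)` i.i.d. uniform on `[0,1]`,
`(B_n)` i.i.d. `Beta(1,θ*)`, all mutually independent), one has
`∑_{j=1}^n X_j = 1 - η_n` surely, and `∑_{j=1}^∞ X_j = 1` almost surely. -/
theorem sb_sum_eq_one {Ω : Type*} [MeasurableSpace Ω] (μ : Measure Ω)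
    [IsProbabilityMeasure μ]
    (ν θ : ℝ) (hν0 : 0 < ν) (hν1 : ν ≤ 1) (hθ : 0 < θ)
    (U B : ℕ → Ω → ℝ)
    (hU : ∀ n, Measurable (U n)) (hB : ∀ n, Measurable (B n))
    (hUr : ∀ n ω, U n ω ∈ Set.Icc (0 : ℝ) 1)
    (hBr : ∀ n ω, B n ω ∈ Set.Icc (0 : ℝ) 1)
    (hUd : ∀ n, ∀ x ∈ Set.Icc (0 : ℝ) 1,
      μ {ω | U n ω ≤ x} = ENNReal.ofReal x)
    (hBd : ∀ n, ∀ x ∈ Set.Icc (0 : ℝ) 1,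
      μ {ω | B n ω ≤ x} = ENNReal.ofReal (1 - (1 - x) ^ θ))
    (hindep : iIndepFun (Sum.elim U B) μ) :
    (∀ n ω, ∑ k ∈ Finset.range n, sbX ν U B k ω = 1 - sbEta ν U B n ω) ∧
    (∀ᵐ ω ∂μ, HasSum (fun n => sbX ν U B n ω) 1) :=
  sb_sum_eq_one_general μ ν θ hν0 hν1 hθ U B hU hB hBr hUd hBd hindep
end

section
/- For the modified stick-breaking process with parameters $\tilde\nu \in (0,1]$ and $\theta^* > 0$, and for any positive integer $n_2$: $\mathbb{E}\left[X_2^{n_2}(1 - \tilde\nu X_1)\right] = \left\{\theta^* + (n_2+1)(1-\tilde\nu)\right\} \frac{\tilde\nu\, n_2!\, \Gamma(\theta^*+1)}{\Gamma(\theta^* + n_2 + 2)}$. -/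
open MeasureTheory ProbabilityTheory
open scoped BigOperators ENNReal

/-!
Write `D := X₁ = 1{U₁ ≤ ν} B₁` and `φ := sbAcceptProb ν`, so that
`X₂ = (1 - D) 1{U₂ ≤ φ(1 - D)} B₂`.
Since `U₂` is uniform and independent of `(D, B₂)`, integrating it out replaces the indicator by
`φ(1 - D)`, and `(1 - ν D) φ(1 - D) = ν (1 - D)`; hence
`E[X₂^n (1 - ν X₁)] = ν E[(1 - D)^(n+1)] E[B₂^n]`. Integrating out `U₁` in the same way gives
`E[(1 - D)^m] = 1 - ν + ν E[(1 - B₁)^m]`, and the remaining expectations are moments of the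
Beta(1, θ) distribution.
-/

open Set

namespace ProbabilityTheory

theorem integral_Ioo_rpow_mul_one_sub_rpow {a b : ℝ} (ha : 0 < a) (hb : 0 < b) :
    ∫ x in Ioo (0 : ℝ) 1, x ^ (a - 1) * (1 - x) ^ (b - 1) = beta a b := by
  rw [beta_eq_betaIntegralReal a b ha hb, Complex.betaIntegral,
    intervalIntegral.integral_of_le zero_le_one, ← integral_Ioc_eq_integral_Ioo,
    ← RCLike.re_to_complex, ← integral_re]
  · refine setIntegral_congr_fun measurableSet_Ioc fun x ⟨hx0, hx1⟩ ↦ ?_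
    norm_cast
    rw [← Complex.ofReal_cpow hx0.le, ← Complex.ofReal_cpow (by linarith),
      RCLike.re_to_complex, Complex.re_mul_ofReal, Complex.ofReal_re]
  · have := Complex.betaIntegral_convergent (u := a) (v := b) (by simpa) (by simpa)
    rwa [intervalIntegrable_iff_integrableOn_Ioc_of_le zero_le_one] at this

theorem integral_betaMeasure {α β : ℝ} (hα : 0 < α) (hβ : 0 < β) (f : ℝ → ℝ) :
    ∫ x, f x ∂betaMeasure α β
      = (beta α β)⁻¹ * ∫ x in Ioo (0 : ℝ) 1, x ^ (α - 1) * (1 - x) ^ (β - 1) * f x := by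
  rw [betaMeasure, integral_withDensity_eq_integral_toReal_smul (f := betaPDF α β)
      (measurable_betaPDFReal α β).ennreal_ofReal (ae_of_all _ fun _ ↦ ENNReal.ofReal_lt_top),
    ← setIntegral_eq_integral_of_forall_compl_eq_zero (s := Ioo 0 1), ← integral_const_mul]
  · refine setIntegral_congr_fun measurableSet_Ioo fun x hx ↦ ?_
    rw [betaPDF_of_pos_lt_one hx.1 hx.2, ENNReal.toReal_ofReal, smul_eq_mul]
    · ring
    · have := beta_pos hα hβ
      have := hx.1
      have := sub_pos.2 hx.2
      positivity
  · intro x hx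
    rw [betaPDF, betaPDFReal, if_neg (show ¬(0 < x ∧ x < 1) from hx), ENNReal.ofReal_zero,
      ENNReal.toReal_zero, zero_smul]

theorem integral_pow_mul_one_sub_pow_betaMeasure {α β : ℝ} (hα : 0 < α) (hβ : 0 < β)
    (j k : ℕ) :
    ∫ x, x ^ j * (1 - x) ^ k ∂betaMeasure α β = beta (α + j) (β + k) / beta α β := by
  rw [integral_betaMeasure hα hβ, setIntegral_congr_fun measurableSet_Ioo
    (g := fun x ↦ x ^ (α + j - 1) * (1 - x) ^ (β + k - 1)),
    integral_Ioo_rpow_mul_one_sub_rpow (by positivity) (by positivity), inv_mul_eq_div]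
  rintro x ⟨hx0, hx1⟩
  dsimp only
  rw [add_sub_right_comm, add_sub_right_comm β, Real.rpow_add hx0,
    Real.rpow_add (sub_pos.2 hx1), Real.rpow_natCast, Real.rpow_natCast]
  ring

theorem beta_one_left {θ : ℝ} (hθ : 0 < θ) : beta 1 θ = θ⁻¹ := by
  rw [beta, Real.Gamma_one, one_mul, add_comm, Real.Gamma_add_one hθ.ne',
    div_mul_cancel_right₀ (Real.Gamma_pos_of_pos hθ).ne']

theorem integral_one_sub_rpow_sub_one {θ : ℝ} (hθ : 0 < θ) (x : ℝ) :
    ∫ t in (0 : ℝ)..x, (1 - t) ^ (θ - 1) = (1 - (1 - x) ^ θ) / θ := by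
  rw [intervalIntegral.integral_comp_sub_left (fun s ↦ s ^ (θ - 1)),
    integral_rpow (Or.inl (by linarith)), sub_add_cancel, sub_zero, Real.one_rpow]

theorem betaMeasure_one_Iic {θ : ℝ} (hθ : 0 < θ) {x : ℝ} (hx0 : 0 ≤ x) (hx1 : x ≤ 1) :
    betaMeasure 1 θ (Iic x) = ENNReal.ofReal (1 - (1 - x) ^ θ) := by
  have := isProbabilityMeasureBeta one_pos hθ
  have hset : (Ioo (0 : ℝ) 1 ∩ Iic x : Set ℝ) =ᵐ[volume] Ioc 0 x := by
    rw [Filter.eventuallyEq_set]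
    filter_upwards [Measure.ae_ne volume (1 : ℝ)] with t ht
    exact ⟨fun h ↦ ⟨h.1.1, h.2⟩, fun h ↦ ⟨⟨h.1, lt_of_le_of_ne (h.2.trans hx1) ht⟩, h.2⟩⟩
  have h := integral_betaMeasure one_pos hθ ((Iic x).indicator 1)
  have hind : ∀ t, t ^ ((1 : ℝ) - 1) * (1 - t) ^ (θ - 1) * (Iic x).indicator 1 t
      = (Iic x).indicator (fun t ↦ (1 - t) ^ (θ - 1)) t := by
    intro t
    by_cases ht : t ∈ Iic x <;> simp [ht]
  simp_rw [hind, integral_indicator_one measurableSet_Iic, setIntegral_indicator measurableSet_Iic,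
    setIntegral_congr_set hset, ← intervalIntegral.integral_of_le hx0,
    integral_one_sub_rpow_sub_one hθ, beta_one_left hθ, inv_inv] at h
  rw [← ofReal_measureReal, h, mul_div_cancel₀ _ hθ.ne']

theorem _root_.MeasureTheory.Measure.ext_of_Iic_of_mem_Icc {μ ν : Measure ℝ}
    [IsProbabilityMeasure μ] [IsProbabilityMeasure ν] {a b : ℝ}
    (ha : μ (Iic a) = 0) (hb : μ (Iic b) = 1) (h : ∀ x ∈ Icc a b, μ (Iic x) = ν (Iic x)) :
    μ = ν := by
  have hab : a ≤ b := by
    by_contra! hba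
    have := measure_mono (μ := μ) (Iic_subset_Iic.2 hba.le)
    simp_all
  refine Measure.ext_of_Iic μ ν fun x ↦ ?_
  rcases lt_or_ge x a with hxa | hax
  · have hμ := measure_mono_null (Iic_subset_Iic.2 hxa.le) ha
    have hν := measure_mono_null (Iic_subset_Iic.2 hxa.le) ((h a ⟨le_rfl, hab⟩).symm.trans ha)
    rw [hμ, hν]
  rcases le_or_gt x b with hxb | hbx
  · exact h x ⟨hax, hxb⟩
  · have hμ : μ (Iic x) = 1 :=
      le_antisymm prob_le_one (hb ▸ measure_mono (Iic_subset_Iic.2 hbx.le))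
    have hν : ν (Iic x) = 1 := le_antisymm prob_le_one
      ((h b ⟨hab, le_rfl⟩).symm.trans hb ▸ measure_mono (Iic_subset_Iic.2 hbx.le))
    rw [hμ, hν]

theorem hasLaw_betaMeasure_one_of_cdf {Ω : Type*} [MeasurableSpace Ω] {P : Measure Ω}
    [IsProbabilityMeasure P] {θ : ℝ} (hθ : 0 < θ) {X : Ω → ℝ} (hX : Measurable X)
    (hcdf : ∀ x ∈ Icc (0 : ℝ) 1, P {ω | X ω ≤ x} = ENNReal.ofReal (1 - (1 - x) ^ θ)) :
    HasLaw X (betaMeasure 1 θ) P where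
  aemeasurable := hX.aemeasurable
  map_eq := by
    have := isProbabilityMeasureBeta one_pos hθ
    have := Measure.isProbabilityMeasure_map (μ := P) hX.aemeasurable
    have hcdf' : ∀ x ∈ Icc (0 : ℝ) 1, P.map X (Iic x) = ENNReal.ofReal (1 - (1 - x) ^ θ) :=
      fun x hx ↦ (Measure.map_apply hX measurableSet_Iic).trans (hcdf x hx)
    refine Measure.ext_of_Iic_of_mem_Icc (a := 0) (b := 1) ?_ ?_ fun x hx ↦ ?_
    · simpa using hcdf' 0 ⟨le_rfl, zero_le_one⟩
    · simpa [Real.zero_rpow hθ.ne'] using hcdf' 1 ⟨zero_le_one, le_rfl⟩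
    · rw [hcdf' x hx, betaMeasure_one_Iic hθ hx.1 hx.2]

theorem integral_pow_betaMeasure_one {θ : ℝ} (hθ : 0 < θ) (k : ℕ) :
    ∫ x, x ^ k ∂betaMeasure 1 θ = k.factorial * Real.Gamma (θ + 1) / Real.Gamma (θ + k + 1) := by
  have h := integral_pow_mul_one_sub_pow_betaMeasure one_pos hθ k 0
  simp only [pow_zero, mul_one, Nat.cast_zero, add_zero] at h
  rw [h, beta_one_left hθ, beta, add_comm 1, Real.Gamma_nat_eq_factorial,
    Real.Gamma_add_one hθ.ne', add_right_comm, add_comm (k : ℝ) θ]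
  field_simp

theorem integral_one_sub_pow_betaMeasure_one {θ : ℝ} (hθ : 0 < θ) (m : ℕ) :
    ∫ x, (1 - x) ^ m ∂betaMeasure 1 θ = θ / (θ + m) := by
  have h := integral_pow_mul_one_sub_pow_betaMeasure one_pos hθ 0 m
  simp only [pow_zero, one_mul, Nat.cast_zero, add_zero] at h
  rw [h, beta_one_left hθ, beta_one_left (by positivity), inv_div_inv]

theorem iIndepFun.indepFun_prodMk₃ {Ω ι β : Type*} [MeasurableSpace Ω] [MeasurableSpace β]
    {μ : Measure Ω} {f : ι → Ω → β} (hf : iIndepFun f μ) (hf_meas : ∀ i, Measurable (f i))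
    (i j k l : ι) (hil : i ≠ l) (hjl : j ≠ l) (hkl : k ≠ l) :
    IndepFun (fun ω ↦ (f i ω, f j ω, f k ω)) (f l) μ := by
  classical
  let g (v : ({i, j, k} : Finset ι) → β) : β × β × β :=
    (v ⟨i, by simp⟩, v ⟨j, by simp⟩, v ⟨k, by simp⟩)
  have hdisj : Disjoint ({i, j, k} : Finset ι) {l} := by simp [hil.symm, hjl.symm, hkl.symm]
  exact (hf.indepFun_finset _ _ hdisj hf_meas).comp (φ := g) (by fun_prop)
    (measurable_pi_apply ⟨l, Finset.mem_singleton_self l⟩)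

theorem integral_ite_le_of_indepFun_uniform {Ω α : Type*} [MeasurableSpace Ω] [MeasurableSpace α]
    {μ : Measure Ω} [IsFiniteMeasure μ] {X : Ω → α} {V : Ω → ℝ} (hX : Measurable X)
    (hV : Measurable V) (hXV : IndepFun X V μ)
    (hVd : ∀ x ∈ Icc (0 : ℝ) 1, μ {ω | V ω ≤ x} = ENNReal.ofReal x)
    {c f : α → ℝ} (hc : Measurable c) (hcX : ∀ ω, c (X ω) ∈ Icc 0 1) (hf : Measurable f)
    (hfX : Integrable (fun ω ↦ f (X ω)) μ) :
    ∫ ω, (if V ω ≤ c (X ω) then f (X ω) else 0) ∂μ = ∫ ω, c (X ω) * f (X ω) ∂μ := by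
  set g : α × ℝ → ℝ := fun p ↦ if p.2 ≤ c p.1 then f p.1 else 0
  have hg : Measurable g :=
    Measurable.ite (measurableSet_le measurable_snd (hc.comp measurable_fst))
      (hf.comp measurable_fst) measurable_const
  have hprod : μ.map (fun ω ↦ (X ω, V ω)) = (μ.map X).prod (μ.map V) :=
    (indepFun_iff_map_prod_eq_prod_map_map hX.aemeasurable hV.aemeasurable).1 hXV
  have hfi : Integrable f (μ.map X) :=
    (integrable_map_measure hf.aestronglyMeasurable hX.aemeasurable).2 hfX
  have hgi : Integrable g ((μ.map X).prod (μ.map V)) := by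
    refine (hfi.comp_fst _).norm.mono' hg.aestronglyMeasurable (ae_of_all _ fun p ↦ ?_)
    by_cases hp : p.2 ≤ c p.1 <;> simp [g, hp]
  have hinner : ∀ᵐ x ∂μ.map X, ∫ v, g (x, v) ∂μ.map V = c x * f x := by
    have hcx : ∀ᵐ x ∂μ.map X, c x ∈ Icc 0 1 :=
      (ae_map_iff hX.aemeasurable (measurableSet_Icc.preimage hc)).2 (ae_of_all _ hcX)
    filter_upwards [hcx] with x hx
    calc ∫ v, g (x, v) ∂μ.map V = ∫ v, (Iic (c x)).indicator (fun _ ↦ f x) v ∂μ.map V := rfl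
      _ = (μ.map V).real (Iic (c x)) * f x := integral_indicator_const _ measurableSet_Iic
      _ = c x * f x := by
          rw [measureReal_def, Measure.map_apply hV measurableSet_Iic,
            show μ (V ⁻¹' Iic (c x)) = _ from hVd _ hx, ENNReal.toReal_ofReal hx.1]
  calc ∫ ω, (if V ω ≤ c (X ω) then f (X ω) else 0) ∂μ
      = ∫ p, g p ∂μ.map (fun ω ↦ (X ω, V ω)) :=
        (integral_map (hX.prodMk hV).aemeasurable hg.aestronglyMeasurable).symm
    _ = ∫ x, ∫ v, g (x, v) ∂μ.map V ∂μ.map X := by rw [hprod, integral_prod _ hgi]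
    _ = ∫ x, c x * f x ∂μ.map X := integral_congr_ae hinner
    _ = ∫ ω, c (X ω) * f (X ω) ∂μ :=
        integral_map hX.aemeasurable (hc.mul hf).aestronglyMeasurable

end ProbabilityTheory

open ProbabilityTheory

-- The conditional probability that the stick is broken at a step where the remaining length is `t`.
noncomputable def sbAcceptProb (ν t : ℝ) : ℝ := ν * t / (1 - ν + ν * t)

theorem sbAcceptProb_mem_Icc {ν t : ℝ} (hν0 : 0 ≤ ν) (hν1 : ν ≤ 1) (ht0 : 0 ≤ t) :
    sbAcceptProb ν t ∈ Icc 0 1 := by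
  have hden : ν * t ≤ 1 - ν + ν * t := by linarith
  exact ⟨div_nonneg (by positivity) (by positivity), div_le_one_of_le₀ hden (by positivity)⟩

theorem one_sub_mul_mul_sbAcceptProb_one_sub {ν d : ℝ} (hν1 : ν ≤ 1) (hd0 : 0 ≤ d)
    (hd1 : d ≤ 1) : (1 - ν * d) * sbAcceptProb ν (1 - d) = ν * (1 - d) := by
  rw [sbAcceptProb, show 1 - ν + ν * (1 - d) = 1 - ν * d by ring]
  rcases eq_or_ne (1 - ν * d) 0 with h | h
  · -- the denominator vanishes only at `ν = d = 1`, where both sides are `0`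
    have hd : d = 1 := by nlinarith
    simp [hd]
  · exact mul_div_cancel₀ _ h

section StickBreaking

variable {ν : ℝ} {Ω : Type*} {U B : ℕ → Ω → ℝ}

theorem sbX_zero (ω : Ω) : sbX ν U B 0 ω = if U 0 ω ≤ ν then B 0 ω else 0 := by
  simp [sbX, sbEta]

theorem sbX_one (ω : Ω) :
    sbX ν U B 1 ω = (1 - sbX ν U B 0 ω) *
      if U 1 ω ≤ sbAcceptProb ν (1 - sbX ν U B 0 ω) then B 1 ω else 0 := by
  have hη : sbEta ν U B 1 ω = 1 - sbX ν U B 0 ω := by simp [sbEta, sbX]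
  rw [sbX, hη, sbAcceptProb]

theorem sbX_one_pow_mul_one_sub_mul_sbX_zero {n : ℕ} (hn : n ≠ 0) (ω : Ω) :
    sbX ν U B 1 ω ^ n * (1 - ν * sbX ν U B 0 ω) =
      if U 1 ω ≤ sbAcceptProb ν (1 - sbX ν U B 0 ω) then
        (1 - sbX ν U B 0 ω) ^ n * (1 - ν * sbX ν U B 0 ω) * B 1 ω ^ n
      else 0 := by
  rw [sbX_one]
  split_ifs
  · rw [mul_pow]
    ring
  · simp [zero_pow hn]

theorem sbX_zero_mem_Icc (hBr : ∀ n ω, B n ω ∈ Icc (0 : ℝ) 1) (ω : Ω) :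
    sbX ν U B 0 ω ∈ Icc 0 1 := by
  rw [sbX_zero]
  split_ifs
  exacts [hBr 0 ω, ⟨le_rfl, zero_le_one⟩]

theorem measurable_sbX_zero [MeasurableSpace Ω] (hU : Measurable (U 0)) (hB : Measurable (B 0)) :
    Measurable (sbX ν U B 0) := by
  simp_rw [funext sbX_zero]
  exact Measurable.ite (measurableSet_le hU measurable_const) hB measurable_const

theorem integral_one_sub_sbX_zero_pow [MeasurableSpace Ω] {μ : Measure Ω}
    [IsProbabilityMeasure μ] {θ : ℝ} (hθ : 0 < θ) (hν0 : 0 ≤ ν) (hν1 : ν ≤ 1)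
    (hU : Measurable (U 0)) (hB : Measurable (B 0)) (hBr : ∀ ω, B 0 ω ∈ Icc (0 : ℝ) 1)
    (hUd : ∀ x ∈ Icc (0 : ℝ) 1, μ {ω | U 0 ω ≤ x} = ENNReal.ofReal x)
    (hBlaw : HasLaw (B 0) (betaMeasure 1 θ) μ) (hBU : IndepFun (B 0) (U 0) μ) (m : ℕ) :
    ∫ ω, (1 - sbX ν U B 0 ω) ^ m ∂μ = 1 - ν + ν * (θ / (θ + m)) := by
  set g : ℝ → ℝ := fun b ↦ (1 - b) ^ m - 1
  have hpow_mem : ∀ ω, (1 - B 0 ω) ^ m ∈ Icc (0 : ℝ) 1 := fun ω ↦ by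
    obtain ⟨h0, h1⟩ := hBr ω
    exact ⟨pow_nonneg (by linarith) m, pow_le_one₀ (by linarith) (by linarith)⟩
  have hg_mem : ∀ ω, g (B 0 ω) ∈ Icc (-1 : ℝ) 0 := fun ω ↦
    ⟨by linarith [(hpow_mem ω).1], by linarith [(hpow_mem ω).2]⟩
  have hpow : Integrable (fun ω ↦ (1 - B 0 ω) ^ m) μ :=
    Integrable.of_mem_Icc 0 1 (by fun_prop) (ae_of_all _ hpow_mem)
  have hgB : Integrable (fun ω ↦ g (B 0 ω)) μ := hpow.sub (integrable_const 1)
  have hsplit : ∀ ω, (1 - sbX ν U B 0 ω) ^ m = (if U 0 ω ≤ ν then g (B 0 ω) else 0) + 1 := by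
    intro ω
    rw [sbX_zero]
    split_ifs <;> simp [g]
  have hite : Integrable (fun ω ↦ if U 0 ω ≤ ν then g (B 0 ω) else 0) μ := by
    refine Integrable.of_mem_Icc (-1) 0 ?_ (ae_of_all _ fun ω ↦ ?_)
    · exact (Measurable.ite (measurableSet_le hU measurable_const) (by fun_prop)
        measurable_const).aemeasurable
    · split_ifs
      exacts [hg_mem ω, ⟨by norm_num, le_rfl⟩]
  have hgθ : ∫ ω, g (B 0 ω) ∂μ = θ / (θ + m) - 1 := by
    have hlaw := hBlaw.integral_comp (f := fun x ↦ (1 - x) ^ m) (by fun_prop)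
    rw [Function.comp_def, integral_one_sub_pow_betaMeasure_one hθ m] at hlaw
    simp [g, integral_sub hpow (integrable_const 1), hlaw]
  simp_rw [hsplit]
  rw [integral_add hite (integrable_const 1),
    integral_ite_le_of_indepFun_uniform (c := fun _ ↦ ν) hB hU hBU hUd measurable_const
      (fun _ ↦ ⟨hν0, hν1⟩) (by fun_prop) hgB, integral_const_mul, hgθ]
  simp
  ring

theorem indepFun_sbX_zero_prodMk_B_one_U_one [MeasurableSpace Ω] {μ : Measure Ω}
    (hU : ∀ n, Measurable (U n)) (hB : ∀ n, Measurable (B n))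
    (hindep : iIndepFun (Sum.elim U B) μ) :
    IndepFun (fun ω ↦ (sbX ν U B 0 ω, B 1 ω)) (U 1) μ := by
  have h := hindep.indepFun_prodMk₃ (by rintro (n | n) <;> simp [hU, hB])
    (.inl 0) (.inr 0) (.inr 1) (.inl 1) (by simp) (by simp) (by simp)
  rw [funext sbX_zero]
  exact h.comp (φ := fun p : ℝ × ℝ × ℝ ↦ (if p.1 ≤ ν then p.2.1 else 0, p.2.2))
    (Measurable.prodMk (Measurable.ite (measurableSet_le measurable_fst measurable_const)
      (by fun_prop) measurable_const) (by fun_prop)) measurable_id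

theorem indepFun_sbX_zero_B_one [MeasurableSpace Ω] {μ : Measure Ω}
    (hU : ∀ n, Measurable (U n)) (hB : ∀ n, Measurable (B n))
    (hindep : iIndepFun (Sum.elim U B) μ) :
    IndepFun (sbX ν U B 0) (B 1) μ := by
  have h := hindep.indepFun_prodMk (by rintro (n | n) <;> simp [hU, hB])
    (.inl 0) (.inr 0) (.inr 1) (by simp) (by simp)
  rw [funext sbX_zero]
  exact h.comp (φ := fun p : ℝ × ℝ ↦ if p.1 ≤ ν then p.2 else 0)
    (Measurable.ite (measurableSet_le measurable_fst measurable_const) (by fun_prop)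
      measurable_const) measurable_id

theorem integral_sbX_one_pow_mul_one_sub_mul_sbX_zero [MeasurableSpace Ω] {μ : Measure Ω}
    [IsProbabilityMeasure μ] (hν0 : 0 ≤ ν) (hν1 : ν ≤ 1)
    (hU : ∀ n, Measurable (U n)) (hB : ∀ n, Measurable (B n))
    (hBr : ∀ n ω, B n ω ∈ Icc (0 : ℝ) 1)
    (hUd : ∀ x ∈ Icc (0 : ℝ) 1, μ {ω | U 1 ω ≤ x} = ENNReal.ofReal x)
    (hindep : iIndepFun (Sum.elim U B) μ) {n : ℕ} (hn : n ≠ 0) :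
    ∫ ω, sbX ν U B 1 ω ^ n * (1 - ν * sbX ν U B 0 ω) ∂μ =
      ν * ((∫ ω, (1 - sbX ν U B 0 ω) ^ (n + 1) ∂μ) * ∫ ω, B 1 ω ^ n ∂μ) := by
  set f : ℝ × ℝ → ℝ := fun p ↦ (1 - p.1) ^ n * (1 - ν * p.1) * p.2 ^ n
  have hD := sbX_zero_mem_Icc (ν := ν) (U := U) hBr
  have hf_mem : ∀ ω, f (sbX ν U B 0 ω, B 1 ω) ∈ Icc (0 : ℝ) 1 := fun ω ↦ by
    obtain ⟨hd0, hd1⟩ := hD ω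
    obtain ⟨hb0, hb1⟩ := hBr 1 ω
    have h1 : 1 - ν * sbX ν U B 0 ω ∈ Icc (0 : ℝ) 1 := ⟨by nlinarith, by nlinarith⟩
    exact ⟨by have := h1.1; positivity, mul_le_one₀ (mul_le_one₀ (pow_le_one₀ (by linarith)
      (by linarith)) h1.1 h1.2) (by positivity) (pow_le_one₀ hb0 hb1)⟩
  have hX : Measurable fun ω ↦ (sbX ν U B 0 ω, B 1 ω) :=
    (measurable_sbX_zero (hU 0) (hB 0)).prodMk (hB 1)
  have h := integral_ite_le_of_indepFun_uniform (c := fun p ↦ sbAcceptProb ν (1 - p.1)) hX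
    (hU 1) (indepFun_sbX_zero_prodMk_B_one_U_one hU hB hindep) hUd
    (by unfold sbAcceptProb; fun_prop)
    (fun ω ↦ sbAcceptProb_mem_Icc hν0 hν1 (sub_nonneg.2 (hD ω).2)) (by fun_prop)
    (Integrable.of_mem_Icc 0 1 (by fun_prop) (ae_of_all _ hf_mem))
  simp_rw [sbX_one_pow_mul_one_sub_mul_sbX_zero hn]
  have hpt : ∀ ω, sbAcceptProb ν (1 - sbX ν U B 0 ω) * f (sbX ν U B 0 ω, B 1 ω) =
      ν * ((1 - sbX ν U B 0 ω) ^ (n + 1) * B 1 ω ^ n) := fun ω ↦ by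
    linear_combination ((1 - sbX ν U B 0 ω) ^ n * B 1 ω ^ n) *
      one_sub_mul_mul_sbAcceptProb_one_sub hν1 (hD ω).1 (hD ω).2
  rw [h, integral_congr_ae (ae_of_all _ hpt), integral_const_mul,
    (indepFun_sbX_zero_B_one hU hB hindep).integral_fun_comp_mul_comp
      (f := fun d ↦ (1 - d) ^ (n + 1)) (g := fun b ↦ b ^ n)
      (measurable_sbX_zero (hU 0) (hB 0)).aemeasurable (hB 1).aemeasurable (by fun_prop)
      (by fun_prop)]

end StickBreaking

theorem sb_moments_X2_general {Ω : Type*} [MeasurableSpace Ω] (μ : Measure Ω)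
    [IsProbabilityMeasure μ]
    (ν θ : ℝ) (hν0 : 0 < ν) (hν1 : ν ≤ 1) (hθ : 0 < θ)
    (U B : ℕ → Ω → ℝ)
    (hU : ∀ n, Measurable (U n)) (hB : ∀ n, Measurable (B n))
    (hBr : ∀ n ω, B n ω ∈ Set.Icc (0 : ℝ) 1)
    (hUd : ∀ n, ∀ x ∈ Set.Icc (0 : ℝ) 1,
      μ {ω | U n ω ≤ x} = ENNReal.ofReal x)
    (hBd : ∀ n, ∀ x ∈ Set.Icc (0 : ℝ) 1,
      μ {ω | B n ω ≤ x} = ENNReal.ofReal (1 - (1 - x) ^ θ))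
    (hindep : iIndepFun (Sum.elim U B) μ)
    (n₂ : ℕ) (hn₂ : 1 ≤ n₂) :
    ∫ ω, (sbX ν U B 1 ω) ^ n₂ * (1 - ν * sbX ν U B 0 ω) ∂μ
      = (θ + ((n₂ : ℝ) + 1) * (1 - ν)) *
          (ν * (n₂.factorial : ℝ) * Real.Gamma (θ + 1) / Real.Gamma (θ + n₂ + 2)) := by
  have hBlaw (n : ℕ) := hasLaw_betaMeasure_one_of_cdf hθ (hB n) (hBd n)
  have hB1 : ∫ ω, B 1 ω ^ n₂ ∂μ =
      n₂.factorial * Real.Gamma (θ + 1) / Real.Gamma (θ + n₂ + 1) := by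
    simpa [Function.comp_def, integral_pow_betaMeasure_one hθ] using
      (hBlaw 1).integral_comp (f := fun x ↦ x ^ n₂) (by fun_prop)
  have hB0U0 : IndepFun (B 0) (U 0) μ := hindep.indepFun (i := .inr 0) (j := .inl 0) (by simp)
  rw [integral_sbX_one_pow_mul_one_sub_mul_sbX_zero hν0.le hν1 hU hB hBr (hUd 1) hindep
      (by omega),
    integral_one_sub_sbX_zero_pow hθ hν0.le hν1 (hU 0) (hB 0) (hBr 0) (hUd 0) (hBlaw 0) hB0U0,
    hB1, show θ + n₂ + 2 = θ + n₂ + 1 + 1 by ring,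
    Real.Gamma_add_one (s := θ + n₂ + 1) (by positivity)]
  have := Real.Gamma_pos_of_pos (show 0 < θ + n₂ + 1 by positivity)
  push_cast
  field_simp
  ring

/-- Moments of `X₂` weighted by `1 - ν X₁`:
`E[X₂^{n₂}(1 - ν X₁)] = {θ* + (n₂+1)(1-ν)} · ν n₂! Γ(θ*+1)/Γ(θ*+n₂+2)`. -/
theorem sb_moments_X2 {Ω : Type*} [MeasurableSpace Ω] (μ : Measure Ω)
    [IsProbabilityMeasure μ]
    (ν θ : ℝ) (hν0 : 0 < ν) (hν1 : ν ≤ 1) (hθ : 0 < θ)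
    (U B : ℕ → Ω → ℝ)
    (hU : ∀ n, Measurable (U n)) (hB : ∀ n, Measurable (B n))
    (hUr : ∀ n ω, U n ω ∈ Set.Icc (0 : ℝ) 1)
    (hBr : ∀ n ω, B n ω ∈ Set.Icc (0 : ℝ) 1)
    (hUd : ∀ n, ∀ x ∈ Set.Icc (0 : ℝ) 1,
      μ {ω | U n ω ≤ x} = ENNReal.ofReal x)
    (hBd : ∀ n, ∀ x ∈ Set.Icc (0 : ℝ) 1,
      μ {ω | B n ω ≤ x} = ENNReal.ofReal (1 - (1 - x) ^ θ))
    (hindep : iIndepFun (Sum.elim U B) μ)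
    (n₂ : ℕ) (hn₂ : 1 ≤ n₂) :
    ∫ ω, (sbX ν U B 1 ω) ^ n₂ * (1 - ν * sbX ν U B 0 ω) ∂μ
      = (θ + ((n₂ : ℝ) + 1) * (1 - ν)) *
          (ν * (n₂.factorial : ℝ) * Real.Gamma (θ + 1) / Real.Gamma (θ + n₂ + 2)) :=
  sb_moments_X2_general μ ν θ hν0 hν1 hθ U B hU hB hBr hUd hBd hindep n₂ hn₂
end
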